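/- arXiv:1508.02542 — 2 statements merged into one kernel-verified Lean document; each statement's English description precedes it below -/
import Mathlib

section
/- If R'_n := 1 + sum_{k=0}^{n-1} 1_{{M_{k+j} - M_k ≠ 0 for all j ≥ 1}} and R_n is the range, then 0 ≤ R_n - R'_n ≤ sum_{k=0}^{n-1} 1_{{∃ j ≥ n-k : M_{k+j} = M_k}}. -/
open Finset Classical in
/-- with `R'_n := 1 + ∑_{k=0}^{n-1} 1{M_{k+j} - M_k ≠ 0, ∀ j ≥ 1}` and `R_n`
the range, one has `0 ≤ R_n - R'_n ≤ ∑_{k=0}^{n-1} 1{∃ j ≥ n-k : M_{k+j} = M_k}`. -/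
theorem range_sub_neverReturn_bound {d : ℕ} (M : ℕ → (Fin d → ℤ))
    (hM0 : M 0 = 0) (n : ℕ) :
    (1 + ∑ k ∈ Finset.range n, (if ∀ j ≥ 1, M (k + j) - M k ≠ 0 then 1 else 0) : ℕ)
        ≤ ((Finset.range (n + 1)).image M).card ∧
      ((Finset.range (n + 1)).image M).card
          - (1 + ∑ k ∈ Finset.range n, (if ∀ j ≥ 1, M (k + j) - M k ≠ 0 then 1 else 0))
        ≤ ∑ k ∈ Finset.range n, (if ∃ j ≥ n - k, M (k + j) = M k then 1 else 0) := by
  classical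
  -- last-visit indices
  set L : Finset ℕ := (Finset.range (n + 1)).filter
      (fun k => ∀ j ≤ n, k < j → M j ≠ M k) with hLdef
  have hMinj : Set.InjOn M (L : Set ℕ) := by
    intro a ha b hb hab
    simp only [hLdef, coe_filter, Set.mem_setOf_eq, mem_range, Nat.lt_succ_iff] at ha hb
    by_contra hne
    rcases Nat.lt_or_ge a b with h | h
    · exact ha.2 b hb.1 h hab.symm
    · exact hb.2 a ha.1 (lt_of_le_of_ne h (Ne.symm hne)) hab
  have himg : (Finset.range (n + 1)).image M = L.image M := by
    apply Finset.Subset.antisymm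
    · intro v hv
      simp only [mem_image, mem_range, Nat.lt_succ_iff] at hv ⊢
      obtain ⟨k, hk, hkv⟩ := hv
      set s : Finset ℕ := (Finset.range (n + 1)).filter (fun k' => M k' = M k) with hs
      have hsne : s.Nonempty := ⟨k, by simp [hs, Nat.lt_succ_iff, hk]⟩
      refine ⟨s.max' hsne, ?_, ?_⟩
      · have hmem := s.max'_mem hsne
        simp only [hs, mem_filter, mem_range, Nat.lt_succ_iff] at hmem
        simp only [hLdef, mem_filter, mem_range, Nat.lt_succ_iff]
        refine ⟨hmem.1, fun j hj hlt hEq => ?_⟩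
        have : j ∈ s := by
          simp [hs, Nat.lt_succ_iff, hj, hEq.trans hmem.2]
        exact absurd (s.le_max' j this) (not_le.mpr hlt)
      · have hmem := s.max'_mem hsne
        simp only [hs, mem_filter, mem_range, Nat.lt_succ_iff] at hmem
        rw [hmem.2, hkv]
    · exact Finset.image_subset_image (Finset.filter_subset _ _)
  have hcardR : ((Finset.range (n + 1)).image M).card = L.card := by
    rw [himg, Finset.card_image_of_injOn hMinj]
  -- the "never revisited" set plus n
  set T : Finset ℕ := insert n ((Finset.range n).filter
      (fun k => ∀ j ≥ 1, M (k + j) - M k ≠ 0)) with hTdef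
  have hnT : n ∉ (Finset.range n).filter (fun k => ∀ j ≥ 1, M (k + j) - M k ≠ 0) := by
    simp
  have hcardT : T.card = 1 + ∑ k ∈ Finset.range n,
      (if ∀ j ≥ 1, M (k + j) - M k ≠ 0 then 1 else 0) := by
    rw [hTdef, Finset.card_insert_of_notMem hnT, Finset.card_filter]
    omega
  have hTL : T ⊆ L := by
    intro k hk
    simp only [hTdef, mem_insert, mem_filter, mem_range] at hk
    simp only [hLdef, mem_filter, mem_range, Nat.lt_succ_iff]
    rcases hk with rfl | ⟨hkn, hP⟩
    · exact ⟨le_rfl, fun j hj hlt => absurd hlt (not_lt.mpr hj)⟩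
    · refine ⟨hkn.le, fun j hj hlt hEq => ?_⟩
      have h1 : 1 ≤ j - k := by omega
      have := hP (j - k) h1
      rw [Nat.add_sub_cancel' hlt.le] at this
      exact this (sub_eq_zero_of_eq hEq)
  constructor
  · rw [hcardR, ← hcardT]
    exact Finset.card_le_card hTL
  · have hsub : L \ T ⊆ (Finset.range n).filter
        (fun k => ∃ j ≥ n - k, M (k + j) = M k) := by
      intro k hk
      simp only [mem_sdiff, hLdef, hTdef, mem_filter, mem_range, mem_insert,
        Nat.lt_succ_iff, not_or, not_and, not_forall] at hk
      obtain ⟨⟨hkn, hlast⟩, hkne, hnp⟩ := hk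
      have hkltn : k < n := lt_of_le_of_ne hkn hkne
      obtain ⟨j, hj1, hjeq⟩ := hnp hkltn
      simp only [not_not] at hjeq
      have hjeq' : M (k + j) = M k := by
        have := sub_eq_zero.mp hjeq
        exact this
      simp only [mem_filter, mem_range]
      refine ⟨hkltn, j, ?_, hjeq'⟩
      by_contra hlt
      push_neg at hlt
      have hkjn : k + j ≤ n := by omega
      exact hlast (k + j) hkjn (by omega) hjeq'
    have h1 : L.card - T.card ≤ ((Finset.range n).filter
        (fun k => ∃ j ≥ n - k, M (k + j) = M k)).card := by
      calc L.card - T.card ≤ (L \ T).card := le_of_eq (Finset.card_sdiff_of_subset hTL).symm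
        _ ≤ _ := Finset.card_le_card hsub
    rw [hcardR, ← hcardT]
    calc L.card - T.card ≤ _ := h1
      _ = _ := Finset.card_filter _ _
end

section
/- If (M_n) has stationary increments and P(M_n = 0) ≤ C n^{-θ} for some θ with 1 < θ < 2 and all n ≥ 1, then E[R_n - R'_n] = O(n^{2-θ}), where R_n is the range up to time n and R'_n = 1 + sum_{k=0}^{n-1} 1_{{M_{k+j} ≠ M_k for all j ≥ 1}}. -/
/-!
Every point of the range `{M_0, …, M_n}` is `M_k` for its last visit time `k ≤ n`. Such a `k`
is `n`, or a time `k < n` after which the process never returns to `M_k` (these are counted by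
`R'_n`), or a time `k < n` after which it returns to `M_k` only later than time `n`. Hence
`R_n - R'_n` is at most the number of `k < n` with a return to `M_k` after time `n`. By
stationarity of the increments this event has probability at most
`∑_{j > n-k} P(M_j = 0) ≤ C (n-k)^{1-θ} / (θ-1)`, and summing over `k` gives `O(n^{2-θ})`.
-/

open MeasureTheory Finset

section LastVisits

variable {α : Type*} [DecidableEq α]

def lastVisits (f : ℕ → α) (n : ℕ) : Finset ℕ :=
  {k ∈ range (n + 1) | ∀ j ∈ Ioc k n, f j ≠ f k}

theorem image_range_eq_image_lastVisits (f : ℕ → α) (n : ℕ) :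
    (range (n + 1)).image f = (lastVisits f n).image f := by
  refine (image_subset_image (filter_subset _ _)).antisymm' fun y hy => ?_
  obtain ⟨k₀, hk₀, rfl⟩ := mem_image.1 hy
  set visits := {k ∈ range (n + 1) | f k = f k₀}
  have hne : visits.Nonempty := ⟨k₀, mem_filter.2 ⟨hk₀, rfl⟩⟩
  obtain ⟨hlast, hval⟩ := mem_filter.1 (visits.max'_mem hne)
  refine mem_image.2 ⟨visits.max' hne, mem_filter.2 ⟨hlast, fun j hj hfj => ?_⟩, hval⟩
  have : j ≤ visits.max' hne :=
    visits.le_max' j (mem_filter.2 ⟨mem_range.2 (by grind), hfj.trans hval⟩)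
  grind

open Classical in
theorem card_image_range_le (f : ℕ → α) (n : ℕ) :
    #((range (n + 1)).image f) ≤
      1 + #{k ∈ range n | ∀ j ≥ 1, f (k + j) ≠ f k} + #{k ∈ range n | ∃ i > n, f i = f k} := by
  set escapes := {k ∈ range n | ∀ j ≥ 1, f (k + j) ≠ f k}
  set lateReturns := {k ∈ range n | ∃ i > n, f i = f k}
  have hsub : lastVisits f n ⊆ insert n (escapes ∪ lateReturns) := by
    intro k hk
    obtain ⟨hk, hlast⟩ := mem_filter.1 hk
    rcases eq_or_lt_of_le (mem_range_succ_iff.1 hk) with rfl | hkn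
    · exact mem_insert_self _ _
    refine mem_insert_of_mem (mem_union.2 ?_)
    by_cases hesc : ∀ j ≥ 1, f (k + j) ≠ f k
    · exact .inl (mem_filter.2 ⟨mem_range.2 hkn, hesc⟩)
    push Not at hesc
    obtain ⟨j, hj, hback⟩ := hesc
    refine .inr (mem_filter.2 ⟨mem_range.2 hkn, k + j, ?_, hback⟩)
    by_contra! hle
    exact hlast (k + j) (mem_Ioc.2 ⟨by omega, hle⟩) hback
  calc #((range (n + 1)).image f)
      = #((lastVisits f n).image f) := by
        rw [image_range_eq_image_lastVisits]
    _ ≤ #(insert n (escapes ∪ lateReturns)) := card_image_le.trans (card_le_card hsub)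
    _ ≤ 1 + #escapes + #lateReturns := by
        grw [card_insert_le, card_union_le]; omega

end LastVisits

theorem sum_range_rpow_neg_le {θ x : ℝ} (hθ : 1 < θ) (hx : 0 < x) (N : ℕ) :
    ∑ j ∈ range N, (x + (j + 1 : ℕ)) ^ (-θ) ≤ x ^ (1 - θ) / (θ - 1) := by
  have hanti : AntitoneOn (fun t : ℝ => t ^ (-θ)) (Set.Icc x (x + N)) := fun a ha b _ hab =>
    Real.rpow_le_rpow_of_nonpos (hx.trans_le ha.1) hab (by linarith)
  have hzero : (0 : ℝ) ∉ Set.uIcc x (x + N) := by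
    rw [Set.uIcc_of_le (by simp)]; exact fun h => hx.not_ge h.1
  calc ∑ j ∈ range N, (x + (j + 1 : ℕ)) ^ (-θ)
      ≤ ∫ t in x..x + N, t ^ (-θ) := hanti.sum_le_integral
    _ = (x ^ (1 - θ) - (x + N) ^ (1 - θ)) / (θ - 1) := by
        rw [integral_rpow (.inr ⟨by linarith, hzero⟩), ← neg_div_neg_eq]; ring_nf
    _ ≤ x ^ (1 - θ) / (θ - 1) := by
        gcongr
        exact sub_le_self _ (by positivity)

theorem mul_rpow_sub_one_le_rpow_sub_rpow {p a : ℝ} (hp₀ : 0 ≤ p) (hp₁ : p ≤ 1) (ha : 0 ≤ a) :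
    p * (a + 1) ^ (p - 1) ≤ (a + 1) ^ p - a ^ p := by
  have ha₁ : 0 < a + 1 := by linarith
  -- Bernoulli: `(a / (a + 1)) ^ p ≤ 1 - p / (a + 1)`
  have h := rpow_one_add_le_one_add_mul_self (s := -1 / (a + 1))
    (by rw [neg_div, neg_le_neg_iff, div_le_one ha₁]; linarith) hp₀ hp₁
  rw [show 1 + -1 / (a + 1) = a / (a + 1) by field_simp; ring, Real.div_rpow ha ha₁.le,
    div_le_iff₀ (by positivity)] at h
  rw [Real.rpow_sub_one ha₁.ne']
  have : (1 + p * (-1 / (a + 1))) * (a + 1) ^ p = (a + 1) ^ p - p * ((a + 1) ^ p / (a + 1)) := by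
    field_simp; ring
  linarith

theorem sum_range_rpow_sub_one_le {p : ℝ} (hp₀ : 0 < p) (hp₁ : p ≤ 1) (n : ℕ) :
    ∑ m ∈ range n, ((m + 1 : ℕ) : ℝ) ^ (p - 1) ≤ (n : ℝ) ^ p / p := by
  rw [le_div_iff₀ hp₀, sum_mul]
  calc ∑ m ∈ range n, ((m + 1 : ℕ) : ℝ) ^ (p - 1) * p
      ≤ ∑ m ∈ range n, (((m + 1 : ℕ) : ℝ) ^ p - (m : ℝ) ^ p) := by
        gcongr with m
        push_cast
        rw [mul_comm]
        exact mul_rpow_sub_one_le_rpow_sub_rpow hp₀.le hp₁ m.cast_nonneg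
    _ = (n : ℝ) ^ p := by
        rw [sum_range_sub (fun m => (m : ℝ) ^ p)]
        simp [Real.zero_rpow hp₀.ne']

theorem nonneg_of_forall_measureReal_le {Ω : Type*} [MeasurableSpace Ω] {μ : Measure Ω}
    {s : ℕ → Set Ω} {θ C : ℝ} (h : ∀ n : ℕ, 1 ≤ n → μ.real (s n) ≤ C * (n : ℝ) ^ (-θ)) : 0 ≤ C := by
  simpa using measureReal_nonneg.trans (h 1 le_rfl)

section StationaryIncrements

variable {Ω E : Type*} [MeasurableSpace Ω] [AddGroup E] [MeasurableSpace E] [MeasurableSub₂ E]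
  [MeasurableSingletonClass E] {μ : Measure Ω} {M : ℕ → Ω → E}

theorem measure_return_eq_measure_eq_zero (hmeas : ∀ n, Measurable (M n))
    (hstat : ∀ k, μ.map (fun ω j => M (k + j) ω - M k ω) = μ.map (fun ω j => M j ω)) (k i : ℕ) :
    μ {ω | M (k + i) ω = M k ω} = μ {ω | M i ω = 0} := by
  have h := congrArg (· {x : ℕ → E | x i = 0}) (hstat k)
  have hset : MeasurableSet {x : ℕ → E | x i = 0} :=
    measurable_pi_apply i (measurableSet_singleton 0)
  rw [Measure.map_apply (measurable_pi_lambda (fun ω j => M (k + j) ω - M k ω)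
      fun j => (hmeas _).sub (hmeas k)) hset,
    Measure.map_apply (measurable_pi_lambda (fun ω j => M j ω) hmeas) hset] at h
  simpa [sub_eq_zero] using h

theorem measureReal_return_after_le [IsFiniteMeasure μ] (hmeas : ∀ n, Measurable (M n))
    (hstat : ∀ k, μ.map (fun ω j => M (k + j) ω - M k ω) = μ.map (fun ω j => M j ω))
    {θ C : ℝ} (hθ : 1 < θ)
    (hret : ∀ n : ℕ, 1 ≤ n → μ.real {ω | M n ω = 0} ≤ C * (n : ℝ) ^ (-θ)) {k n : ℕ} (hk : k < n) :
    μ.real {ω | ∃ i > n, M i ω = M k ω} ≤ C / (θ - 1) * ((n - k : ℕ) : ℝ) ^ (1 - θ) := by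
  set m := n - k
  have hm : (0 : ℝ) < m := by simp [m, hk]
  have hC := nonneg_of_forall_measureReal_le hret
  have hsub : {ω | ∃ i > n, M i ω = M k ω} ⊆ ⋃ j : ℕ, {ω | M (k + (m + (j + 1))) ω = M k ω} := by
    rintro ω ⟨i, hi, hback⟩
    exact Set.mem_iUnion.2 ⟨i - n - 1, by rwa [show k + (m + (i - n - 1 + 1)) = i by omega]⟩
  refine ENNReal.toReal_le_of_le_ofReal (by positivity) ?_
  calc μ {ω | ∃ i > n, M i ω = M k ω}
      ≤ ∑' j : ℕ, μ {ω | M (k + (m + (j + 1))) ω = M k ω} :=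
        (measure_mono hsub).trans (measure_iUnion_le _)
    _ = ∑' j : ℕ, μ {ω | M (m + (j + 1)) ω = 0} := by
        simp_rw [measure_return_eq_measure_eq_zero hmeas hstat]
    _ ≤ ∑' j : ℕ, ENNReal.ofReal (C * ((m : ℝ) + (j + 1 : ℕ)) ^ (-θ)) := by
        gcongr with j
        rw [ENNReal.le_ofReal_iff_toReal_le (measure_ne_top _ _) (by positivity)]
        exact_mod_cast hret _ (by omega)
    _ ≤ ENNReal.ofReal (C / (θ - 1) * (m : ℝ) ^ (1 - θ)) := by
        refine ENNReal.tsum_le_of_sum_range_le fun N => ?_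
        rw [← ENNReal.ofReal_sum_of_nonneg fun j _ => by positivity, ← mul_sum, div_mul_eq_mul_div,
          mul_div_assoc]
        gcongr
        exact sum_range_rpow_neg_le hθ hm N

end StationaryIncrements

theorem integral_mono_of_integral_nonneg {Ω : Type*} [MeasurableSpace Ω] {μ : Measure Ω}
    {f g : Ω → ℝ} (hg : Integrable g μ) (hfg : ∀ ω, f ω ≤ g ω) (hg₀ : 0 ≤ ∫ ω, g ω ∂μ) :
    ∫ ω, f ω ∂μ ≤ ∫ ω, g ω ∂μ := by
  by_cases hf : Integrable f μ
  · exact integral_mono hf hg hfg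
  · rwa [integral_undef hf]

open MeasureTheory Finset Classical in
theorem expectation_range_sub_bigO_general {d : ℕ} {Ω : Type*} [MeasurableSpace Ω]
    (μ : Measure Ω) [IsProbabilityMeasure μ]
    (M : ℕ → Ω → (Fin d → ℤ)) (hmeas : ∀ n, Measurable (M n))
    (hstat : ∀ k, Measure.map (fun ω => (fun j => M (k + j) ω - M k ω : ℕ → Fin d → ℤ)) μ
        = Measure.map (fun ω => (fun j => M j ω : ℕ → Fin d → ℤ)) μ)
    (θ C : ℝ) (hθ1 : 1 < θ) (hθ2 : θ < 2)
    (hret : ∀ n : ℕ, 1 ≤ n → (μ {ω | M n ω = 0}).toReal ≤ C * (n : ℝ) ^ (-θ)) :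
    ∃ C' : ℝ, ∀ n : ℕ, 1 ≤ n →
      ∫ ω, ((((Finset.range (n + 1)).image (fun k => M k ω)).card : ℝ)
          - (1 + ∑ k ∈ Finset.range n,
              (if ∀ j ≥ 1, M (k + j) ω ≠ M k ω then (1 : ℝ) else 0))) ∂μ
        ≤ C' * (n : ℝ) ^ (2 - θ) := by
  have hC := nonneg_of_forall_measureReal_le hret
  refine ⟨C / ((θ - 1) * (2 - θ)), fun n _ => ?_⟩
  have hB : ∀ k, MeasurableSet {ω | ∃ i > n, M i ω = M k ω} := fun k => by measurability
  have hB_int : ∀ k, Integrable ({ω | ∃ i > n, M i ω = M k ω}.indicator (1 : Ω → ℝ)) μ :=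
    fun k => (integrable_const 1).indicator (hB k)
  calc _ ≤ ∫ ω, ∑ k ∈ range n, {ω | ∃ i > n, M i ω = M k ω}.indicator 1 ω ∂μ := by
        refine integral_mono_of_integral_nonneg (integrable_finsetSum _ fun k _ => hB_int k)
          (fun ω => ?_) (integral_nonneg fun ω => sum_nonneg fun k _ =>
            Set.indicator_nonneg (fun _ _ => zero_le_one) _)
        have h := card_image_range_le (fun k => M k ω) n
        rw [← Nat.cast_le (α := ℝ)] at h
        push_cast [natCast_card_filter] at h
        simp only [Set.indicator_apply, Set.mem_ofPred_eq, Pi.one_apply]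
        linarith
    _ = ∑ k ∈ range n, μ.real {ω | ∃ i > n, M i ω = M k ω} := by
        rw [integral_finsetSum _ fun k _ => hB_int k]
        simp_rw [integral_indicator_one (hB _)]
    _ ≤ ∑ k ∈ range n, C / (θ - 1) * ((n - k : ℕ) : ℝ) ^ (1 - θ) := by
        gcongr with k hk
        exact measureReal_return_after_le hmeas hstat hθ1 hret (mem_range.1 hk)
    _ = C / (θ - 1) * ∑ m ∈ range n, ((m + 1 : ℕ) : ℝ) ^ ((2 - θ) - 1) := by
        rw [mul_sum, ← sum_range_reflect (fun m => C / (θ - 1) * ((m + 1 : ℕ) : ℝ) ^ (2 - θ - 1))]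
        refine sum_congr rfl fun k hk => ?_
        rw [show n - 1 - k + 1 = n - k by grind, show 2 - θ - 1 = 1 - θ by ring]
    _ ≤ C / (θ - 1) * ((n : ℝ) ^ (2 - θ) / (2 - θ)) := by
        gcongr
        exact sum_range_rpow_sub_one_le (by linarith) (by linarith) n
    _ = C / ((θ - 1) * (2 - θ)) * (n : ℝ) ^ (2 - θ) := by
        rw [div_mul_div_comm, div_mul_eq_mul_div]

open MeasureTheory Finset Classical in
/-- if `(M_n)` has stationary increments and `P(M_n = 0) ≤ C n^{-θ}` with
`1 < θ < 2`, then `E[R_n - R'_n] = O(n^{2-θ})`. -/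
theorem expectation_range_sub_bigO {d : ℕ} {Ω : Type*} [MeasurableSpace Ω]
    (μ : Measure Ω) [IsProbabilityMeasure μ]
    (M : ℕ → Ω → (Fin d → ℤ)) (hmeas : ∀ n, Measurable (M n))
    (hM0 : ∀ ω, M 0 ω = 0)
    (hstat : ∀ k, Measure.map (fun ω => (fun j => M (k + j) ω - M k ω : ℕ → Fin d → ℤ)) μ
        = Measure.map (fun ω => (fun j => M j ω : ℕ → Fin d → ℤ)) μ)
    (θ C : ℝ) (hθ1 : 1 < θ) (hθ2 : θ < 2) (hC : 0 < C)
    (hret : ∀ n : ℕ, 1 ≤ n → (μ {ω | M n ω = 0}).toReal ≤ C * (n : ℝ) ^ (-θ)) :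
    ∃ C' : ℝ, ∀ n : ℕ, 1 ≤ n →
      ∫ ω, ((((Finset.range (n + 1)).image (fun k => M k ω)).card : ℝ)
          - (1 + ∑ k ∈ Finset.range n,
              (if ∀ j ≥ 1, M (k + j) ω ≠ M k ω then (1 : ℝ) else 0))) ∂μ
        ≤ C' * (n : ℝ) ^ (2 - θ) :=
  expectation_range_sub_bigO_general μ M hmeas hstat θ C hθ1 hθ2 hret
end
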